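/- arXiv:1912.09956 — 4 statements merged into one kernel-verified Lean document; each statement's English description precedes it below -/
import Mathlib

section
/- The bracket [·,·]~ is well defined, ℂ-bilinear, antisymmetric, and satisfies the Jacobi identity; that is, the ℂ-module 𝔤 = ⊕_{m∈ℤ²} z^m·(gl(r,ℂ) × ℂ²) equipped with [·,·]~ is a complex Lie algebra. Concretely, for all A,A',A'' ∈ gl(r,ℂ), n,n',n'' ∈ ℂ² and m,m',m'' ∈ ℤ²: (i) [(A,n)z^m,(A',n')z^{m'}]~ = −[(A',n')z^{m'},(A,n)z^m]~, and (ii) [[(A,n)z^m,(A',n')z^{m'}]~,(A'',n'')z^{m''}]~ + [[(A',n')z^{m'},(A'',n'')z^{m''}]~,(A,n)z^m]~ + [[(A'',n'')z^{m''},(A,n)z^m]~,(A',n')z^{m'}]~ = 0. (In particular the subspace 𝔥̃ = ⊕_{m≠0} z^m·(gl(r,ℂ) ⊕ ℂ·m^⊥), where n is proportional to a vector m^⊥ with ⟨m,m^⊥⟩ = 0, is a Lie algebra — the extended tropical vertex Lie algebra.) -/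
open Finsupp

/-- The pairing `⟨m,n⟩ = m₁n₁ + m₂n₂` between `ℤ²` and `ℂ²`. -/
noncomputable def pairMN (m : Fin 2 → ℤ) (n : Fin 2 → ℂ) : ℂ :=
  (m 0 : ℂ) * n 0 + (m 1 : ℂ) * n 1

/-- Coefficients: pairs `(A, n)` with `A ∈ gl(r,ℂ)` and `n ∈ ℂ²`. -/
abbrev tvCoef (r : ℕ) := Matrix (Fin r) (Fin r) ℂ × (Fin 2 → ℂ)

/-- The module `𝔤 = ⊕_{m ∈ ℤ²} z^m · (gl(r,ℂ) × ℂ²)`. -/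
abbrev tvModule (r : ℕ) := (Fin 2 → ℤ) →₀ tvCoef r

/-- The bracket of pure coefficients:
`[(A,n)z^m,(A',n')z^{m'}] = ([A,A'] + ⟨m',n⟩A' − ⟨m,n'⟩A, ⟨m',n⟩n' − ⟨m,n'⟩n)`. -/
noncomputable def coefBr {r : ℕ} (v : tvCoef r) (m : Fin 2 → ℤ)
    (v' : tvCoef r) (m' : Fin 2 → ℤ) : tvCoef r :=
  (v.1 * v'.1 - v'.1 * v.1 + pairMN m' v.2 • v'.1 - pairMN m v'.2 • v.1,
   pairMN m' v.2 • v'.2 - pairMN m v'.2 • v.2)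

/-- The bracket `[·,·]~` on `𝔤`, extended ℂ-bilinearly from pure elements. -/
noncomputable def tvBracket {r : ℕ} (x y : tvModule r) : tvModule r :=
  x.sum fun m v => y.sum fun m' v' => Finsupp.single (m + m') (coefBr v m v' m')


lemma pairMN_smul (m : Fin 2 → ℤ) (c : ℂ) (n : Fin 2 → ℂ) :
    pairMN m (c • n) = c * pairMN m n := by simp [pairMN]; ring

lemma pairMN_sub (m : Fin 2 → ℤ) (n n' : Fin 2 → ℂ) :
    pairMN m (n - n') = pairMN m n - pairMN m n' := by simp [pairMN]; ring

lemma pairMN_add_left (a b : Fin 2 → ℤ) (x : Fin 2 → ℂ) :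
    pairMN (a + b) x = pairMN a x + pairMN b x := by simp [pairMN]; ring

lemma coefBr_zero_left {r : ℕ} (m m' : Fin 2 → ℤ) (v' : tvCoef r) :
    coefBr 0 m v' m' = 0 := by
  simp [coefBr, pairMN, Prod.ext_iff]

lemma coefBr_zero_right {r : ℕ} (m m' : Fin 2 → ℤ) (v : tvCoef r) :
    coefBr v m 0 m' = 0 := by
  simp [coefBr, pairMN, Prod.ext_iff]

lemma tvBracket_single {r : ℕ} (m m' : Fin 2 → ℤ) (v v' : tvCoef r) :
    tvBracket (Finsupp.single m v) (Finsupp.single m' v') =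
      Finsupp.single (m + m') (coefBr v m v' m') := by
  unfold tvBracket
  rw [Finsupp.sum_single_index, Finsupp.sum_single_index]
  · rw [coefBr_zero_right, Finsupp.single_zero]
  · rw [Finsupp.sum_single_index] <;>
      simp [coefBr_zero_left, coefBr_zero_right]

lemma coefBr_antisymm {r : ℕ} (v v' : tvCoef r) (m m' : Fin 2 → ℤ) :
    coefBr v m v' m' = - coefBr v' m' v m := by
  apply Prod.ext <;> simp [coefBr] <;> abel

lemma coefBr_jacobi {r : ℕ} (A A' A'' : Matrix (Fin r) (Fin r) ℂ)
    (n n' n'' : Fin 2 → ℂ) (m m' m'' : Fin 2 → ℤ) :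
    coefBr (coefBr (A,n) m (A',n') m') (m+m') (A'',n'') m'' +
    coefBr (coefBr (A',n') m' (A'',n'') m'') (m'+m'') (A,n) m +
    coefBr (coefBr (A'',n'') m'' (A,n) m) (m''+m) (A',n') m' = 0 := by
  apply Prod.ext
  · simp only [coefBr, pairMN_sub, pairMN_smul, pairMN_add_left, Prod.fst_add,
      Prod.snd_add, Prod.fst_zero, sub_mul, mul_sub, add_mul, mul_add,
      smul_mul_assoc, mul_smul_comm, mul_assoc, smul_sub, smul_add, smul_smul]
    module
  · simp only [coefBr, pairMN_sub, pairMN_smul, pairMN_add_left, Prod.snd_add,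
      Prod.snd_zero, smul_sub, smul_add, smul_smul]
    module

/-- The bracket `[·,·]~` is antisymmetric and satisfies the Jacobi identity on
pure elements `(A,n)z^m`; hence `(𝔤, [·,·]~)` is a complex Lie algebra, and in
particular its subspace `𝔥̃` is a Lie algebra — the extended tropical vertex
Lie algebra. -/
theorem tvBracket_antisymm_and_jacobi (r : ℕ) (hr : 1 ≤ r)
    (A A' A'' : Matrix (Fin r) (Fin r) ℂ) (n n' n'' : Fin 2 → ℂ)
    (m m' m'' : Fin 2 → ℤ) :
    tvBracket (Finsupp.single m (A, n)) (Finsupp.single m' (A', n')) =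
      - tvBracket (Finsupp.single m' (A', n')) (Finsupp.single m (A, n)) ∧
    tvBracket
        (tvBracket (Finsupp.single m (A, n)) (Finsupp.single m' (A', n')))
        (Finsupp.single m'' (A'', n'')) +
      tvBracket
        (tvBracket (Finsupp.single m' (A', n')) (Finsupp.single m'' (A'', n'')))
        (Finsupp.single m (A, n)) +
      tvBracket
        (tvBracket (Finsupp.single m'' (A'', n'')) (Finsupp.single m (A, n)))
        (Finsupp.single m' (A', n')) = 0 := by
  constructor
  · rw [tvBracket_single, tvBracket_single, coefBr_antisymm,
      Finsupp.single_neg, add_comm m' m]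
  · rw [tvBracket_single, tvBracket_single, tvBracket_single,
      tvBracket_single, tvBracket_single, tvBracket_single]
    have h1 : m' + m'' + m = m + m' + m'' := by abel
    have h2 : m'' + m + m' = m + m' + m'' := by abel
    rw [h1, h2, ← Finsupp.single_add, ← Finsupp.single_add, coefBr_jacobi,
      Finsupp.single_zero]
end

section
/- For all real numbers a, b > 0 and all natural numbers j, β, there exists a constant C > 0 such that for every ℏ ∈ (0,1]: ∫_{−a}^{b} |u|^β · |d^j/du^j ( e^{−u²/ℏ} / √(πℏ) )| du ≤ C · ℏ^{(β−j)/2}. (Consequently the normalized Gaussian one-form δ(u) = e^{−u²/ℏ}/√(πℏ) du has asymptotic support of order 1 on the line {u = 0}.) -/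
open Real intervalIntegral

open MeasureTheory

lemma gas_iteratedDeriv_const_mul (k : ℝ) (f : ℝ → ℝ) (n : ℕ) :
    iteratedDeriv n (fun u => k * f u) = fun x => k * iteratedDeriv n f x := by
  induction n with
  | zero => simp [iteratedDeriv_zero]
  | succ n ih =>
    funext x
    rw [iteratedDeriv_succ, iteratedDeriv_succ, ih, deriv_const_mul_field]

lemma gas_int_abs_pow_gauss (m : ℕ) :
    Integrable fun x : ℝ => |x| ^ m * Real.exp (-(x ^ 2 / 2)) := by
  have h := (integrable_rpow_mul_exp_neg_mul_sq (b := 1/2) (by norm_num)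
      (s := (m : ℝ)) (by have := Nat.cast_nonneg (α := ℝ) m; linarith)).abs
  refine h.congr ?_
  filter_upwards with x
  rw [Real.rpow_natCast, abs_mul, abs_pow, abs_of_pos (Real.exp_pos _)]
  congr 1
  ring_nf

lemma gas_smooth : ContDiff ℝ (⊤ : ℕ∞) (fun y : ℝ => Real.exp (-(y ^ 2 / 2))) :=
  Real.contDiff_exp.comp (((contDiff_id.pow 2).div_const 2).neg)

/-- auxiliary integrand -/
noncomputable def gasG (j β : ℕ) (t : ℝ) : ℝ :=
  |t| ^ β * |Polynomial.aeval t (Polynomial.hermite j)| * Real.exp (-(t ^ 2 / 2))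

lemma gasG_nonneg (j β : ℕ) (t : ℝ) : 0 ≤ gasG j β t := by
  unfold gasG; positivity

lemma gasG_continuous (j β : ℕ) : Continuous (gasG j β) := by
  unfold gasG
  exact ((continuous_abs.pow β).mul (Polynomial.continuous_aeval _).abs).mul
    (Real.continuous_exp.comp (((continuous_pow 2).div_const 2).neg))

lemma gasG_integrable (j β : ℕ) : Integrable (gasG j β) := by
  set P := Polynomial.hermite j with hP
  set B : ℝ → ℝ := fun t =>
    ∑ k ∈ Finset.range (P.natDegree + 1),
      |(P.coeff k : ℝ)| * (|t| ^ (β + k) * Real.exp (-(t ^ 2 / 2))) with hB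
  have hBint : Integrable B :=
    integrable_finset_sum _ fun k _ => (gas_int_abs_pow_gauss (β + k)).const_mul _
  refine hBint.mono' (gasG_continuous j β).aestronglyMeasurable ?_
  filter_upwards with t
  rw [Real.norm_eq_abs, abs_of_nonneg (gasG_nonneg j β t)]
  have h1 : |Polynomial.aeval t P| ≤
      ∑ k ∈ Finset.range (P.natDegree + 1), |(P.coeff k : ℝ)| * |t| ^ k := by
    rw [Polynomial.aeval_eq_sum_range]
    refine (Finset.abs_sum_le_sum_abs _ _).trans ?_
    refine Finset.sum_le_sum fun k _ => ?_
    rw [zsmul_eq_mul, abs_mul, abs_pow]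
  calc gasG j β t
      ≤ |t| ^ β * (∑ k ∈ Finset.range (P.natDegree + 1), |(P.coeff k : ℝ)| * |t| ^ k) *
        Real.exp (-(t ^ 2 / 2)) := by
        unfold gasG
        refine mul_le_mul_of_nonneg_right (mul_le_mul_of_nonneg_left h1 (by positivity))
          (Real.exp_nonneg _)
    _ = B t := by
        rw [hB, Finset.mul_sum, Finset.sum_mul]
        refine Finset.sum_congr rfl fun k _ => ?_
        rw [pow_add]; ring

/-- The normalized Gaussian one-form `δ(u) = e^{−u²/ℏ}/√(πℏ) du` has asymptotic
support of order 1 on the line `{u = 0}`: for all `a, b > 0` and `j, β ∈ ℕ`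
there is `C > 0` with
`∫_{−a}^{b} |u|^β |d^j/du^j (e^{−u²/ℏ}/√(πℏ))| du ≤ C·ℏ^{(β−j)/2}`
uniformly for `ℏ ∈ (0,1]`. -/
theorem gaussian_asymptotic_support (a b : ℝ) (ha : 0 < a) (hb : 0 < b)
    (j β : ℕ) :
    ∃ C : ℝ, 0 < C ∧ ∀ h : ℝ, h ∈ Set.Ioc (0 : ℝ) 1 →
      (∫ u in (-a)..b,
          |u| ^ β *
            |iteratedDeriv j (fun u : ℝ => Real.exp (-u ^ 2 / h) / Real.sqrt (π * h)) u|) ≤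
        C * h ^ (((β : ℝ) - (j : ℝ)) / 2) := by
  set I : ℝ := ∫ t, gasG j β t with hI
  have hInn : 0 ≤ I := integral_nonneg (gasG_nonneg j β)
  set C₀ : ℝ := (Real.sqrt π)⁻¹ * ((Real.sqrt 2) ^ j * (((Real.sqrt 2) ^ β)⁻¹ *
      (Real.sqrt 2)⁻¹)) with hC₀
  have hC₀nn : 0 ≤ C₀ := by positivity
  refine ⟨C₀ * I + 1, by positivity, ?_⟩
  intro h hmem
  obtain ⟨hh0, hh1⟩ := hmem
  set s : ℝ := Real.sqrt h with hs
  have hs0 : 0 < s := Real.sqrt_pos.2 hh0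
  set c : ℝ := Real.sqrt 2 / s with hcdef
  have hc0 : 0 < c := by positivity
  have hc2 : c ^ 2 = 2 / h := by
    rw [hcdef, div_pow, Real.sq_sqrt (by norm_num : (0:ℝ) ≤ 2), hs,
      Real.sq_sqrt hh0.le]
  -- rewrite the function
  have hfeq : (fun u : ℝ => Real.exp (-u ^ 2 / h) / Real.sqrt (π * h)) =
      fun u => (Real.sqrt (π * h))⁻¹ * Real.exp (-((c * u) ^ 2 / 2)) := by
    funext u
    rw [div_eq_mul_inv, mul_comm]
    congr 2
    rw [mul_pow, hc2]
    field_simp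
  have hder : ∀ u : ℝ,
      iteratedDeriv j (fun u : ℝ => Real.exp (-u ^ 2 / h) / Real.sqrt (π * h)) u =
      (Real.sqrt (π * h))⁻¹ * (c ^ j * ((-1 : ℝ) ^ j *
        Polynomial.aeval (c * u) (Polynomial.hermite j) * Real.exp (-((c * u) ^ 2 / 2)))) := by
    intro u
    rw [hfeq, gas_iteratedDeriv_const_mul]
    beta_reduce
    congr 1
    have e2 : iteratedDeriv j (fun u : ℝ => Real.exp (-((c * u) ^ 2 / 2))) u =
        c ^ j * iteratedDeriv j (fun y : ℝ => Real.exp (-(y ^ 2 / 2))) (c * u) :=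
      congrFun (iteratedDeriv_comp_const_mul (gas_smooth.of_le (by exact_mod_cast le_top)) c) u
    rw [e2]
    congr 1
    rw [iteratedDeriv_eq_iterate]
    exact Polynomial.deriv_gaussian_eq_hermite_mul_gaussian j (c * u)
  set K : ℝ := (Real.sqrt (π * h))⁻¹ * (c ^ j * (c ^ β)⁻¹) with hK
  have hKnn : 0 ≤ K := by positivity
  have habs : ∀ u : ℝ,
      |u| ^ β * |iteratedDeriv j
        (fun u : ℝ => Real.exp (-u ^ 2 / h) / Real.sqrt (π * h)) u| =
      K * gasG j β (c * u) := by
    intro u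
    rw [hder u]
    unfold gasG
    rw [abs_mul, abs_mul, abs_mul, abs_mul,
      abs_of_nonneg (inv_nonneg.2 (Real.sqrt_nonneg _)), abs_pow, abs_pow,
      abs_of_pos hc0, abs_neg, abs_one, one_pow, Real.abs_exp,
      abs_mul (c) u, abs_of_pos hc0, mul_pow]
    rw [hK]
    field_simp
    ring
  have hle : c * (-a) ≤ c * b := by nlinarith
  have hJle : (∫ t in (c * (-a))..(c * b), gasG j β t) ≤ I := by
    rw [intervalIntegral.integral_of_le hle]
    exact setIntegral_le_integral (gasG_integrable j β)
      (Filter.Eventually.of_forall (gasG_nonneg j β))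
  have hchg : (∫ u in (-a)..b,
      |u| ^ β * |iteratedDeriv j
        (fun u : ℝ => Real.exp (-u ^ 2 / h) / Real.sqrt (π * h)) u|) =
      K * (c⁻¹ * ∫ t in (c * (-a))..(c * b), gasG j β t) := by
    rw [intervalIntegral.integral_congr (g := fun u => K * gasG j β (c * u))
      (fun u _ => habs u)]
    rw [intervalIntegral.integral_const_mul,
      intervalIntegral.integral_comp_mul_left _ hc0.ne', smul_eq_mul]
  -- scalar computation
  have hspow : h ^ (((β : ℝ) - (j : ℝ)) / 2) = s ^ ((β : ℤ) - (j : ℤ)) := by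
    have hsr : s = h ^ ((1 : ℝ) / 2) := by
      rw [hs, Real.sqrt_eq_rpow]
    rw [hsr, ← Real.rpow_intCast (h ^ ((1:ℝ)/2)) _, ← Real.rpow_mul hh0.le]
    congr 1
    push_cast
    ring
  have hKc : K * c⁻¹ = C₀ * h ^ (((β : ℝ) - (j : ℝ)) / 2) := by
    rw [hspow, hK, hcdef, hC₀, Real.sqrt_mul pi_pos.le, ← hs,
      zpow_sub₀ hs0.ne', zpow_natCast, zpow_natCast, div_pow, div_pow]
    field_simp
  rw [hchg]
  have h1 : K * (c⁻¹ * ∫ t in (c * (-a))..(c * b), gasG j β t) ≤ K * (c⁻¹ * I) := by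
    refine mul_le_mul_of_nonneg_left ?_ hKnn
    exact mul_le_mul_of_nonneg_left hJle (by positivity)
  have h2 : K * (c⁻¹ * I) = (C₀ * I) * h ^ (((β : ℝ) - (j : ℝ)) / 2) := by
    rw [← mul_assoc, hKc]; ring
  have h3 : (0:ℝ) < h ^ (((β : ℝ) - (j : ℝ)) / 2) := Real.rpow_pos_of_pos hh0 _
  calc _ ≤ K * (c⁻¹ * I) := h1
    _ = (C₀ * I) * h ^ (((β : ℝ) - (j : ℝ)) / 2) := h2
    _ ≤ (C₀ * I + 1) * h ^ (((β : ℝ) - (j : ℝ)) / 2) := by nlinarith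
end

section
/- Let s ∈ ℤ and fix u₀ < 0. For each ℏ ∈ (0,1] let h_ℏ : ℝ² → ℂ be smooth, and assume: (i) for every compact set K ⊂ ℝ² with K ∩ {u₂ = 0} = ∅ and every j ∈ ℕ there exist C, c > 0 such that sup_{x∈K} ‖D^j h_ℏ(x)‖ ≤ C·e^{−c/ℏ} for all ℏ ∈ (0,1]; (ii) for every compact interval K₁ ⊂ ℝ, all a, b > 0 and all j, β ∈ ℕ there exists C > 0 such that ∫_{−a}^{b} |u₂|^β · ( sup_{u₁∈K₁} ‖D^j h_ℏ(u₁,u₂)‖ ) du₂ ≤ C·ℏ^{−(j+s−β−1)/2} for all ℏ ∈ (0,1]. Then the family F_ℏ(u₁,u₂) := ∫_{u₀}^{u₂} h_ℏ(u₁,r) dr satisfies: for every compact set K' ⊂ ℝ² and every j ∈ ℕ there exists C' > 0 such that sup_{x∈K'} ‖D^j F_ℏ(x)‖ ≤ C'·ℏ^{−(s−1+j)/2} for all ℏ ∈ (0,1]. -/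
open Real intervalIntegral

namespace HWaux

open MeasureTheory Set ContinuousLinearMap



/-- directional derivative in the first coordinate direction -/
noncomputable def d1 (g : ℝ × ℝ → ℂ) : ℝ × ℝ → ℂ := fun p => fderiv ℝ g p (1, 0)

/-- smoothness of all finite orders -/
def Sm (g : ℝ × ℝ → ℂ) : Prop := ∀ n : ℕ, ContDiff ℝ n g

lemma sm_d1 {g : ℝ × ℝ → ℂ} (hg : Sm g) : Sm (HWaux.d1 g) := by
  intro n
  have h1 : ContDiff ℝ n (fderiv ℝ g) :=
    (hg (n + 1)).fderiv_right (by exact_mod_cast le_rfl)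
  have : HWaux.d1 g = fun p => (ContinuousLinearMap.apply ℝ ℂ ((1:ℝ), (0:ℝ))) (fderiv ℝ g p) := rfl
  rw [this]
  exact (ContinuousLinearMap.apply ℝ ℂ ((1:ℝ), (0:ℝ))).contDiff.comp h1

lemma norm_apply10_le : ‖ContinuousLinearMap.apply ℝ ℂ ((1:ℝ), (0:ℝ))‖ ≤ 1 := by
  refine opNorm_le_bound _ zero_le_one fun L => ?_
  rw [one_mul]
  calc ‖(ContinuousLinearMap.apply ℝ ℂ ((1:ℝ), (0:ℝ))) L‖ = ‖L ((1:ℝ), (0:ℝ))‖ := rfl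
    _ ≤ ‖L‖ * ‖((1:ℝ), (0:ℝ))‖ := L.le_opNorm _
    _ = ‖L‖ := by simp [Prod.norm_def]

lemma norm_itfd_clm_comp_le {F G : Type*} [NormedAddCommGroup F] [NormedSpace ℝ F]
    [NormedAddCommGroup G] [NormedSpace ℝ G] (e : F →L[ℝ] G) {f : ℝ × ℝ → F}
    {n : ℕ} (hf : ContDiff ℝ n f) (x : ℝ × ℝ) :
    ‖iteratedFDeriv ℝ n (fun y => e (f y)) x‖ ≤ ‖e‖ * ‖iteratedFDeriv ℝ n f x‖ := by
  have h := e.iteratedFDeriv_comp_left (hf.contDiffAt (x := x)) (le_refl (n : WithTop ℕ∞))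
  have h2 : (fun y => e (f y)) = (⇑e ∘ f) := rfl
  rw [h2, h]
  exact e.norm_compContinuousMultilinearMap_le _

lemma norm_itfd_d1_le {g : ℝ × ℝ → ℂ} (hg : Sm g) (m : ℕ) (x : ℝ × ℝ) :
    ‖iteratedFDeriv ℝ m (d1 g) x‖ ≤ ‖iteratedFDeriv ℝ (m + 1) g x‖ := by
  have h1 : ContDiff ℝ m (fderiv ℝ g) :=
    (hg (m + 1)).fderiv_right (by exact_mod_cast le_rfl)
  have h2 : d1 g = fun p => (ContinuousLinearMap.apply ℝ ℂ ((1:ℝ), (0:ℝ))) (fderiv ℝ g p) := rfl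
  rw [h2]
  calc ‖iteratedFDeriv ℝ m (fun p => (ContinuousLinearMap.apply ℝ ℂ ((1:ℝ), (0:ℝ)))
          (fderiv ℝ g p)) x‖
      ≤ ‖ContinuousLinearMap.apply ℝ ℂ ((1:ℝ), (0:ℝ))‖ * ‖iteratedFDeriv ℝ m (fderiv ℝ g) x‖ :=
        norm_itfd_clm_comp_le _ h1 x
    _ ≤ 1 * ‖iteratedFDeriv ℝ m (fderiv ℝ g) x‖ :=
        mul_le_mul_of_nonneg_right norm_apply10_le (norm_nonneg _)
    _ = ‖iteratedFDeriv ℝ (m + 1) g x‖ := by rw [one_mul, norm_iteratedFDeriv_fderiv]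

lemma Sm.d1_iter {g : ℝ × ℝ → ℂ} (hg : Sm g) (k : ℕ) : Sm (d1^[k] g) := by
  induction k generalizing g with
  | zero => exact hg
  | succ k ih =>
    rw [Function.iterate_succ_apply]
    exact ih (sm_d1 hg)

lemma norm_itfd_d1_iter_le {g : ℝ × ℝ → ℂ} (hg : Sm g) (k : ℕ) :
    ∀ (m : ℕ) (x : ℝ × ℝ),
      ‖iteratedFDeriv ℝ m (d1^[k] g) x‖ ≤ ‖iteratedFDeriv ℝ (m + k) g x‖ := by
  induction k generalizing g with
  | zero => intro m x; simp
  | succ k ih =>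
    intro m x
    rw [Function.iterate_succ_apply]
    calc ‖iteratedFDeriv ℝ m (d1^[k] (d1 g)) x‖ ≤ ‖iteratedFDeriv ℝ (m + k) (d1 g) x‖ :=
          ih (sm_d1 hg) m x
      _ ≤ ‖iteratedFDeriv ℝ (m + k + 1) g x‖ := norm_itfd_d1_le hg (m + k) x
      _ = ‖iteratedFDeriv ℝ (m + (k + 1)) g x‖ := by rw [Nat.add_assoc]

lemma exp_neg_div_le (c : ℝ) (hc : 0 < c) (p : ℝ) :
    ∃ C : ℝ, 0 < C ∧ ∀ x ∈ Set.Ioc (0:ℝ) 1, Real.exp (-c / x) ≤ C * x ^ p := by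
  set n : ℕ := ⌈p⌉₊ with hn
  have hpn : p ≤ (n : ℝ) := Nat.le_ceil p
  refine ⟨(n.factorial : ℝ) / c ^ n, by positivity, fun x hx => ?_⟩
  obtain ⟨hx0, hx1⟩ := hx
  have hcx : 0 < c / x := div_pos hc hx0
  have h1 : (c / x) ^ n / (n.factorial : ℝ) ≤ Real.exp (c / x) :=
    Real.pow_div_factorial_le_exp (c / x) hcx.le n
  have h0 : (0:ℝ) < (c / x) ^ n / (n.factorial : ℝ) := by positivity
  have h2 : Real.exp (-c / x) ≤ ((c / x) ^ n / (n.factorial : ℝ))⁻¹ := by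
    rw [neg_div, Real.exp_neg]
    exact inv_anti₀ h0 h1
  have h3 : ((c / x) ^ n / (n.factorial : ℝ))⁻¹ = (n.factorial : ℝ) / c ^ n * x ^ n := by
    rw [div_pow]
    field_simp
  have h4 : x ^ (n : ℝ) ≤ x ^ p := Real.rpow_le_rpow_of_exponent_ge hx0 hx1 hpn
  calc Real.exp (-c / x) ≤ (n.factorial : ℝ) / c ^ n * x ^ n := by rw [← h3]; exact h2
    _ = (n.factorial : ℝ) / c ^ n * x ^ (n : ℝ) := by rw [Real.rpow_natCast]
    _ ≤ (n.factorial : ℝ) / c ^ n * x ^ p := by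
        exact mul_le_mul_of_nonneg_left h4 (by positivity)

lemma biSup_eq_csSup {g : ℝ → ℝ} {s : Set ℝ} (hne : s.Nonempty) (hnn : ∀ x, 0 ≤ g x)
    (hbdd : BddAbove (g '' s)) : (⨆ x ∈ s, g x) = sSup (g '' s) := by
  have hbdd' : BddAbove (Set.range fun x => ⨆ _ : x ∈ s, g x) := by
    obtain ⟨ub, hub⟩ := hbdd
    refine ⟨max ub 0, ?_⟩
    rintro _ ⟨x, rfl⟩
    simp only []
    by_cases hx : x ∈ s
    · rw [ciSup_pos (f := fun _ => g x) hx]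
      exact le_trans (hub ⟨x, hx, rfl⟩) (le_max_left _ _)
    · haveI : IsEmpty (x ∈ s) := ⟨hx⟩
      rw [show (⨆ _ : x ∈ s, g x) = 0 from Real.iSup_of_isEmpty _]
      exact le_max_right _ _
  apply le_antisymm
  · apply ciSup_le
    intro x
    by_cases hx : x ∈ s
    · rw [ciSup_pos (f := fun _ => g x) hx]
      exact le_csSup hbdd ⟨x, hx, rfl⟩
    · haveI : IsEmpty (x ∈ s) := ⟨hx⟩
      rw [show (⨆ _ : x ∈ s, g x) = 0 from Real.iSup_of_isEmpty _]
      apply Real.sSup_nonneg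
      rintro y ⟨x, _, rfl⟩; exact hnn x
  · apply csSup_le (hne.image g)
    rintro y ⟨x, hx, rfl⟩
    calc g x = ⨆ _ : x ∈ s, g x := (ciSup_pos (f := fun _ => g x) hx).symm
      _ ≤ ⨆ x ∈ s, g x := le_ciSup hbdd' x

lemma norm_intervalIntegral_le {W : Type*} [NormedAddCommGroup W] [NormedSpace ℝ W]
    {f : ℝ → W} {M : ℝ → ℝ} {u₀ x₂ A B : ℝ} (h1 : A ≤ u₀) (h2 : u₀ ≤ B) (h3 : A ≤ x₂)
    (h4 : x₂ ≤ B) (hf : Continuous f) (hM : Continuous M) (hfM : ∀ r, ‖f r‖ ≤ M r) :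
    ‖∫ r in u₀..x₂, f r‖ ≤ ∫ r in A..B, M r := by
  have hMnn : ∀ r, 0 ≤ M r := fun r => le_trans (norm_nonneg _) (hfM r)
  have hMae : 0 ≤ᵐ[volume.restrict (Set.Ioc A B)] M :=
    Filter.Eventually.of_forall hMnn
  rcases le_total u₀ x₂ with hle | hle
  · calc ‖∫ r in u₀..x₂, f r‖ ≤ ∫ r in u₀..x₂, ‖f r‖ :=
        intervalIntegral.norm_integral_le_integral_norm hle
      _ ≤ ∫ r in u₀..x₂, M r :=
        intervalIntegral.integral_mono_on hle (hf.norm.intervalIntegrable _ _)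
          (hM.intervalIntegrable _ _) fun r _ => hfM r
      _ ≤ ∫ r in A..B, M r :=
        intervalIntegral.integral_mono_interval h1 hle h4 hMae (hM.intervalIntegrable _ _)
  · rw [intervalIntegral.integral_symm]
    calc ‖-∫ r in x₂..u₀, f r‖ = ‖∫ r in x₂..u₀, f r‖ := norm_neg _
      _ ≤ ∫ r in x₂..u₀, ‖f r‖ := intervalIntegral.norm_integral_le_integral_norm hle
      _ ≤ ∫ r in x₂..u₀, M r :=
        intervalIntegral.integral_mono_on hle (hf.norm.intervalIntegrable _ _)
          (hM.intervalIntegrable _ _) fun r _ => hfM r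
      _ ≤ ∫ r in A..B, M r :=
        intervalIntegral.integral_mono_interval h3 hle h2 hMae (hM.intervalIntegrable _ _)

noncomputable def Iop (u₀ : ℝ) (g : ℝ × ℝ → ℂ) : ℝ × ℝ → ℂ :=
  fun y => ∫ r in u₀..y.2, g (y.1, r)

def Acurve (u₀ : ℝ) (y : ℝ × ℝ) (t : ℝ) : ℝ × ℝ := (y.1, u₀ + t * (y.2 - u₀))

lemma continuous_Acurve (u₀ : ℝ) : Continuous fun p : (ℝ × ℝ) × ℝ => Acurve u₀ p.1 p.2 := by
  unfold Acurve; fun_prop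

noncomputable def W0 : ℝ × ℝ →L[ℝ] ℝ × ℝ := (ContinuousLinearMap.fst ℝ ℝ ℝ).prod 0

noncomputable def W1 : ℝ × ℝ →L[ℝ] ℝ × ℝ := ContinuousLinearMap.prod 0 (ContinuousLinearMap.snd ℝ ℝ ℝ)

noncomputable def Tt (t : ℝ) : ℝ × ℝ →L[ℝ] ℝ × ℝ := W0 + t • W1

lemma Tt_apply (t : ℝ) (v : ℝ × ℝ) : Tt t v = (v.1, t * v.2) := by
  simp [Tt, W0, W1, Prod.ext_iff, smul_eq_mul]

lemma norm_Tt_le {t : ℝ} (ht : |t| ≤ 1) : ‖Tt t‖ ≤ 1 := by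
  refine opNorm_le_bound _ zero_le_one fun v => ?_
  rw [one_mul, Tt_apply]
  rw [show ‖((v.1 : ℝ), t * v.2)‖ = max ‖v.1‖ ‖t * v.2‖ from rfl]
  apply max_le
  · exact norm_fst_le v
  · calc ‖t * v.2‖ = |t| * ‖v.2‖ := by rw [norm_mul]; rfl
      _ ≤ 1 * ‖v‖ := mul_le_mul ht (norm_snd_le v) (norm_nonneg _) zero_le_one
      _ = ‖v‖ := one_mul _

lemma Iop_eq (u₀ : ℝ) {g : ℝ × ℝ → ℂ} (hg : Continuous g) (y : ℝ × ℝ) :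
    Iop u₀ g y = ∫ t in (0:ℝ)..1, (y.2 - u₀) • g (y.1, u₀ + t * (y.2 - u₀)) := by
  have hσ : ∀ t ∈ uIcc (0:ℝ) 1, HasDerivAt (fun t => u₀ + t * (y.2 - u₀)) (y.2 - u₀) t :=
    fun t _ => (hasDerivAt_mul_const (y.2 - u₀)).const_add u₀
  have h := intervalIntegral.integral_comp_smul_deriv hσ continuousOn_const
      (hg.comp (Continuous.prodMk_right y.1))
  simp only [Function.comp] at h
  rw [show u₀ + (0:ℝ) * (y.2 - u₀) = u₀ by ring, show u₀ + (1:ℝ) * (y.2 - u₀) = y.2 by ring] at h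
  rw [Iop, ← h]

noncomputable def Phi' (u₀ : ℝ) (g : ℝ × ℝ → ℂ) (y : ℝ × ℝ) (t : ℝ) : ℝ × ℝ →L[ℝ] ℂ :=
  (y.2 - u₀) • ((fderiv ℝ g (Acurve u₀ y t)).comp (Tt t)) +
    (ContinuousLinearMap.snd ℝ ℝ ℝ).smulRight (g (Acurve u₀ y t))

lemma hasFDerivAt_Phi (u₀ : ℝ) {g : ℝ × ℝ → ℂ} (hg : Sm g) (t : ℝ) (y : ℝ × ℝ) :
    HasFDerivAt (fun y => (y.2 - u₀) • g (Acurve u₀ y t)) (Phi' u₀ g y t) y := by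
  have hA : HasFDerivAt (fun y => Acurve u₀ y t) (Tt t) y := by
    have heq : (fun y : ℝ × ℝ => Acurve u₀ y t) = fun y => Tt t y + ((0 : ℝ), u₀ - t * u₀) := by
      funext z
      rw [Tt_apply]
      simp only [Acurve, Prod.mk_add_mk, Prod.ext_iff]
      constructor <;> ring
    rw [heq]
    exact (Tt t).hasFDerivAt.add_const _
  have hgd : HasFDerivAt g (fderiv ℝ g (Acurve u₀ y t)) (Acurve u₀ y t) :=
    (((hg 1).differentiable (by simp)) (Acurve u₀ y t)).hasFDerivAt
  have hcomp : HasFDerivAt (fun y => g (Acurve u₀ y t))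
      ((fderiv ℝ g (Acurve u₀ y t)).comp (Tt t)) y := hgd.comp y hA
  have hc : HasFDerivAt (fun y : ℝ × ℝ => y.2 - u₀) (ContinuousLinearMap.snd ℝ ℝ ℝ) y :=
    hasFDerivAt_snd.sub_const u₀
  exact hc.smul hcomp

lemma continuous_Phi' (u₀ : ℝ) {g : ℝ × ℝ → ℂ} (hg : Sm g) :
    Continuous fun p : (ℝ × ℝ) × ℝ => Phi' u₀ g p.1 p.2 := by
  have hgc : Continuous g := (hg 0).continuous
  have hfdc : Continuous (fderiv ℝ g) := ((hg 1).fderiv_right (m := 0) (by norm_num)).continuous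
  have hTtc : Continuous fun t : ℝ => Tt t := continuous_const.add (continuous_id.smul continuous_const)
  unfold Phi'
  apply Continuous.add
  · apply Continuous.smul (f := fun p : (ℝ × ℝ) × ℝ => p.1.2 - u₀)
      (g := fun p : (ℝ × ℝ) × ℝ => (fderiv ℝ g (Acurve u₀ p.1 p.2)).comp (Tt p.2))
    · exact (continuous_snd.comp continuous_fst).sub continuous_const
    · exact Continuous.clm_comp (hfdc.comp (continuous_Acurve u₀)) (hTtc.comp continuous_snd)
  · exact (ContinuousLinearMap.smulRightL ℝ (ℝ × ℝ) ℂ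
      (ContinuousLinearMap.snd ℝ ℝ ℝ)).continuous.comp (hgc.comp (continuous_Acurve u₀))

set_option maxHeartbeats 1000000 in
lemma hasFDerivAt_Iop (u₀ : ℝ) {g : ℝ × ℝ → ℂ} (hg : Sm g) (y₀ : ℝ × ℝ) :
    HasFDerivAt (Iop u₀ g)
      ((ContinuousLinearMap.fst ℝ ℝ ℝ).smulRight (Iop u₀ (d1 g) y₀) +
        (ContinuousLinearMap.snd ℝ ℝ ℝ).smulRight (g y₀)) y₀ := by
  have hgc : Continuous g := (hg 0).continuous
  have hd1c : Continuous (d1 g) := (sm_d1 hg 0).continuous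
  -- continuity of t ↦ Φ' y t for fixed y and of everything else
  have hΦ'c := continuous_Phi' u₀ hg
  have hΦ'cy : ∀ y : ℝ × ℝ, Continuous fun t => Phi' u₀ g y t := fun y =>
    hΦ'c.comp (continuous_const.prodMk continuous_id)
  have hΦcy : ∀ y : ℝ × ℝ, Continuous fun t => (y.2 - u₀) • g (Acurve u₀ y t) := fun y =>
    Continuous.smul (f := fun _ : ℝ => y.2 - u₀) continuous_const (hgc.comp ((continuous_Acurve u₀).comp
      (continuous_const.prodMk continuous_id)))
  -- bound on a compact neighbourhood
  set Q : Set ((ℝ × ℝ) × ℝ) := Metric.closedBall y₀ 1 ×ˢ Set.Icc (0 : ℝ) 1 with hQdef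
  have hQ : IsCompact Q := (isCompact_closedBall _ _).prod isCompact_Icc
  obtain ⟨Bd, hBd⟩ := hQ.bddAbove_image (hΦ'c.norm.continuousOn)
  have hBd' : ∀ p ∈ Q, ‖Phi' u₀ g p.1 p.2‖ ≤ Bd := fun p hp => hBd ⟨p, hp, rfl⟩
  -- the dominated convergence lemma
  have key := intervalIntegral.hasFDerivAt_integral_of_dominated_of_fderiv_le
    (F := fun (y : ℝ × ℝ) (t : ℝ) => (y.2 - u₀) • g (Acurve u₀ y t))
    (F' := fun (y : ℝ × ℝ) (t : ℝ) => Phi' u₀ g y t) (x₀ := y₀) (a := 0) (b := 1)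
    (bound := fun _ => Bd) (μ := volume) (Metric.ball_mem_nhds y₀ zero_lt_one)
    (Filter.Eventually.of_forall fun y => (hΦcy y).aestronglyMeasurable)
    ((hΦcy y₀).intervalIntegrable 0 1)
    ((hΦ'cy y₀).aestronglyMeasurable)
    (Filter.Eventually.of_forall fun t ht y hy => by
      refine hBd' (y, t) ⟨Metric.ball_subset_closedBall hy, ?_⟩
      rw [Set.uIoc_of_le zero_le_one] at ht
      exact ⟨ht.1.le, ht.2⟩)
    intervalIntegrable_const
    (Filter.Eventually.of_forall fun t _ y _ => hasFDerivAt_Phi u₀ hg t y)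
  have hfun : (fun y : ℝ × ℝ => ∫ t in (0:ℝ)..1, (y.2 - u₀) • g (Acurve u₀ y t)) = Iop u₀ g := by
    funext y
    exact (Iop_eq u₀ hgc y).symm
  rw [hfun] at key
  -- it remains to identify the derivative
  have hsplit : ∀ (q : ℝ × ℝ) (w : ℝ × ℝ),
      fderiv ℝ g q w = w.1 • fderiv ℝ g q (1, 0) + w.2 • fderiv ℝ g q (0, 1) := by
    intro q w
    have hw : w = w.1 • ((1:ℝ), (0:ℝ)) + w.2 • ((0:ℝ), (1:ℝ)) := by
      simp [Prod.ext_iff]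
    conv_lhs => rw [hw]
    rw [ContinuousLinearMap.map_add, ContinuousLinearMap.map_smul, ContinuousLinearMap.map_smul]
  have hident : (∫ t in (0:ℝ)..1, Phi' u₀ g y₀ t) =
      (ContinuousLinearMap.fst ℝ ℝ ℝ).smulRight (Iop u₀ (d1 g) y₀) +
        (ContinuousLinearMap.snd ℝ ℝ ℝ).smulRight (g y₀) := by
    apply ContinuousLinearMap.ext
    intro v
    rw [ContinuousLinearMap.intervalIntegral_apply ((hΦ'cy y₀).intervalIntegrable 0 1) v]
    have hrw : ∀ t : ℝ, Phi' u₀ g y₀ t v =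
        v.1 • ((y₀.2 - u₀) • d1 g (Acurve u₀ y₀ t)) +
          v.2 • ((t * (y₀.2 - u₀)) • (fderiv ℝ g (Acurve u₀ y₀ t) (0, 1)) +
            g (Acurve u₀ y₀ t)) := by
      intro t
      have h1 : Phi' u₀ g y₀ t v = (y₀.2 - u₀) • (fderiv ℝ g (Acurve u₀ y₀ t) (v.1, t * v.2)) +
          v.2 • g (Acurve u₀ y₀ t) := by
        simp [Phi', Tt_apply]
      rw [h1, hsplit]
      show (y₀.2 - u₀) • (v.1 • d1 g (Acurve u₀ y₀ t) +
          (t * v.2) • (fderiv ℝ g (Acurve u₀ y₀ t)) (0, 1)) + v.2 • g (Acurve u₀ y₀ t) = _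
      simp only [Complex.real_smul]
      push_cast
      ring
    simp only [hrw]
    -- integrability of the pieces
    have hcont1 : Continuous fun t : ℝ => (y₀.2 - u₀) • d1 g (Acurve u₀ y₀ t) :=
      Continuous.smul (f := fun _ : ℝ => y₀.2 - u₀) continuous_const (hd1c.comp ((continuous_Acurve u₀).comp
        (continuous_const.prodMk continuous_id)))
    have hcontY : Continuous fun t : ℝ => fderiv ℝ g (Acurve u₀ y₀ t) (0, 1) := by
      have hfdc : Continuous (fderiv ℝ g) := ((hg 1).fderiv_right (m := 0) (by norm_num)).continuous
      exact (hfdc.comp ((continuous_Acurve u₀).comp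
        (continuous_const.prodMk continuous_id))).clm_apply continuous_const
    have hcont2 : Continuous fun t : ℝ =>
        (t * (y₀.2 - u₀)) • (fderiv ℝ g (Acurve u₀ y₀ t) (0, 1)) + g (Acurve u₀ y₀ t) :=
      ((continuous_id.mul continuous_const).smul hcontY).add
        (hgc.comp ((continuous_Acurve u₀).comp (continuous_const.prodMk continuous_id)))
    rw [intervalIntegral.integral_add (f := fun t => v.1 • ((y₀.2 - u₀) • d1 g (Acurve u₀ y₀ t)))
      (g := fun t => v.2 • ((t * (y₀.2 - u₀)) • (fderiv ℝ g (Acurve u₀ y₀ t) (0, 1)) + g (Acurve u₀ y₀ t)))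
      ((Continuous.smul (f := fun _ : ℝ => v.1) continuous_const hcont1).intervalIntegrable 0 1)
      ((Continuous.smul (f := fun _ : ℝ => v.2) continuous_const hcont2).intervalIntegrable 0 1)]
    rw [intervalIntegral.integral_smul v.1, intervalIntegral.integral_smul v.2]
    have hint1 : (∫ t in (0:ℝ)..1, (y₀.2 - u₀) • d1 g (Acurve u₀ y₀ t)) =
        Iop u₀ (d1 g) y₀ := (Iop_eq u₀ hd1c y₀).symm
    have hint2 : (∫ t in (0:ℝ)..1,
        ((t * (y₀.2 - u₀)) • (fderiv ℝ g (Acurve u₀ y₀ t) (0, 1)) + g (Acurve u₀ y₀ t))) =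
        g y₀ := by
      have hφd : ∀ t ∈ uIcc (0:ℝ) 1, HasDerivAt (fun t : ℝ => t • g (Acurve u₀ y₀ t))
          ((t * (y₀.2 - u₀)) • (fderiv ℝ g (Acurve u₀ y₀ t) (0, 1)) + g (Acurve u₀ y₀ t)) t := by
        intro t _
        have hcurve : HasDerivAt (fun t : ℝ => Acurve u₀ y₀ t) ((0:ℝ), y₀.2 - u₀) t :=
          HasDerivAt.prodMk (hasDerivAt_const t y₀.1) ((hasDerivAt_mul_const (y₀.2 - u₀)).const_add u₀)
        have hgd : HasFDerivAt g (fderiv ℝ g (Acurve u₀ y₀ t)) (Acurve u₀ y₀ t) :=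
          (((hg 1).differentiable (by simp)) (Acurve u₀ y₀ t)).hasFDerivAt
        have hψ : HasDerivAt (fun t : ℝ => g (Acurve u₀ y₀ t))
            ((y₀.2 - u₀) • fderiv ℝ g (Acurve u₀ y₀ t) (0, 1)) t := by
          have h := hgd.comp_hasDerivAt t hcurve
          have : fderiv ℝ g (Acurve u₀ y₀ t) ((0:ℝ), y₀.2 - u₀) =
              (y₀.2 - u₀) • fderiv ℝ g (Acurve u₀ y₀ t) (0, 1) := by
            rw [hsplit]
            simp
          rwa [this] at h
        have h : HasDerivAt (fun t : ℝ => t • g (Acurve u₀ y₀ t))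
            (t • ((y₀.2 - u₀) • fderiv ℝ g (Acurve u₀ y₀ t) (0, 1)) + (1:ℝ) • g (Acurve u₀ y₀ t)) t :=
          (hasDerivAt_id t).smul hψ
        refine h.congr_deriv ?_
        simp only [Complex.real_smul, one_smul, id_eq]
        push_cast
        ring
      rw [intervalIntegral.integral_eq_sub_of_hasDerivAt hφd (hcont2.intervalIntegrable 0 1)]
      show (1:ℝ) • g (Acurve u₀ y₀ 1) - (0:ℝ) • g (Acurve u₀ y₀ 0) = g y₀
      rw [one_smul, zero_smul, sub_zero]
      have : Acurve u₀ y₀ 1 = y₀ := by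
        unfold Acurve
        rw [show u₀ + 1 * (y₀.2 - u₀) = y₀.2 by ring]
      rw [this]
    rw [hint1, hint2]
    simp [ContinuousLinearMap.smulRight_apply]
  rw [hident] at key
  exact key

lemma contDiff_Iop (u₀ : ℝ) : ∀ (n : ℕ) (g : ℝ × ℝ → ℂ), Sm g → ContDiff ℝ n (Iop u₀ g) := by
  intro n
  induction n with
  | zero =>
    intro g hg
    rw [show ((0:ℕ) : WithTop ℕ∞) = 0 from rfl, contDiff_zero]
    have hd : Differentiable ℝ (Iop u₀ g) := fun y => (hasFDerivAt_Iop u₀ hg y).differentiableAt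
    exact hd.continuous
  | succ n ih =>
    intro g hg
    rw [show ((n + 1 : ℕ) : WithTop ℕ∞) = (n : WithTop ℕ∞) + 1 by push_cast; rfl]
    rw [contDiff_succ_iff_fderiv]
    refine ⟨fun y => (hasFDerivAt_Iop u₀ hg y).differentiableAt, ?_, ?_⟩
    · intro hω
      exact absurd hω (by simp)
    · have hfd : fderiv ℝ (Iop u₀ g) = fun y =>
          (ContinuousLinearMap.smulRightL ℝ (ℝ × ℝ) ℂ (ContinuousLinearMap.fst ℝ ℝ ℝ))
            (Iop u₀ (d1 g) y) +
          (ContinuousLinearMap.smulRightL ℝ (ℝ × ℝ) ℂ (ContinuousLinearMap.snd ℝ ℝ ℝ)) (g y) :=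
        funext fun y => (hasFDerivAt_Iop u₀ hg y).fderiv
      rw [hfd]
      apply ContDiff.add
      · exact (ContinuousLinearMap.smulRightL ℝ (ℝ × ℝ) ℂ
          (ContinuousLinearMap.fst ℝ ℝ ℝ)).contDiff.comp (ih (d1 g) (sm_d1 hg))
      · exact (ContinuousLinearMap.smulRightL ℝ (ℝ × ℝ) ℂ
          (ContinuousLinearMap.snd ℝ ℝ ℝ)).contDiff.comp (hg n)

lemma norm_smulRightL_comp_le (c : (ℝ × ℝ) →L[ℝ] ℝ) (hc : ‖c‖ ≤ 1) {f : ℝ × ℝ → ℂ} {n : ℕ}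
    (hf : ContDiff ℝ n f) (x : ℝ × ℝ) :
    ‖iteratedFDeriv ℝ n (fun y => (ContinuousLinearMap.smulRightL ℝ (ℝ × ℝ) ℂ c) (f y)) x‖ ≤
      ‖iteratedFDeriv ℝ n f x‖ := by
  have hsr : ‖ContinuousLinearMap.smulRightL ℝ (ℝ × ℝ) ℂ c‖ ≤ 1 := by
    refine opNorm_le_bound _ zero_le_one fun z => ?_
    rw [show (ContinuousLinearMap.smulRightL ℝ (ℝ × ℝ) ℂ c) z = c.smulRight z from rfl,
      ContinuousLinearMap.norm_smulRight_apply, one_mul]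
    exact mul_le_of_le_one_left (norm_nonneg z) hc
  calc ‖iteratedFDeriv ℝ n (fun y => (ContinuousLinearMap.smulRightL ℝ (ℝ × ℝ) ℂ c) (f y)) x‖
      ≤ ‖ContinuousLinearMap.smulRightL ℝ (ℝ × ℝ) ℂ c‖ * ‖iteratedFDeriv ℝ n f x‖ :=
        norm_itfd_clm_comp_le _ hf x
    _ ≤ 1 * ‖iteratedFDeriv ℝ n f x‖ := mul_le_mul_of_nonneg_right hsr (norm_nonneg _)
    _ = ‖iteratedFDeriv ℝ n f x‖ := one_mul _

lemma claimS (u₀ : ℝ) : ∀ (j : ℕ) (g : ℝ × ℝ → ℂ), Sm g → ∀ x : ℝ × ℝ,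
    ‖iteratedFDeriv ℝ j (Iop u₀ g) x‖ ≤ ‖Iop u₀ (d1^[j] g) x‖ +
      ∑ i ∈ Finset.range j, ‖iteratedFDeriv ℝ (j - 1 - i) (d1^[i] g) x‖ := by
  intro j
  induction j with
  | zero =>
    intro g hg x
    simp [norm_iteratedFDeriv_zero]
  | succ j ih =>
    intro g hg x
    have hfd : fderiv ℝ (Iop u₀ g) = fun y =>
        (ContinuousLinearMap.smulRightL ℝ (ℝ × ℝ) ℂ (ContinuousLinearMap.fst ℝ ℝ ℝ))
          (Iop u₀ (d1 g) y) +
        (ContinuousLinearMap.smulRightL ℝ (ℝ × ℝ) ℂ (ContinuousLinearMap.snd ℝ ℝ ℝ)) (g y) :=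
      funext fun y => (hasFDerivAt_Iop u₀ hg y).fderiv
    have h1 : ‖iteratedFDeriv ℝ (j + 1) (Iop u₀ g) x‖ =
        ‖iteratedFDeriv ℝ j (fderiv ℝ (Iop u₀ g)) x‖ := norm_iteratedFDeriv_fderiv.symm
    have hP : ContDiff ℝ j (fun y => (ContinuousLinearMap.smulRightL ℝ (ℝ × ℝ) ℂ
        (ContinuousLinearMap.fst ℝ ℝ ℝ)) (Iop u₀ (d1 g) y)) :=
      (ContinuousLinearMap.smulRightL ℝ (ℝ × ℝ) ℂ
        (ContinuousLinearMap.fst ℝ ℝ ℝ)).contDiff.comp (contDiff_Iop u₀ j (d1 g) (sm_d1 hg))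
    have hQ : ContDiff ℝ j (fun y => (ContinuousLinearMap.smulRightL ℝ (ℝ × ℝ) ℂ
        (ContinuousLinearMap.snd ℝ ℝ ℝ)) (g y)) :=
      (ContinuousLinearMap.smulRightL ℝ (ℝ × ℝ) ℂ
        (ContinuousLinearMap.snd ℝ ℝ ℝ)).contDiff.comp (hg j)
    have hadd : iteratedFDeriv ℝ j (fderiv ℝ (Iop u₀ g)) x =
        iteratedFDeriv ℝ j (fun y => (ContinuousLinearMap.smulRightL ℝ (ℝ × ℝ) ℂ
          (ContinuousLinearMap.fst ℝ ℝ ℝ)) (Iop u₀ (d1 g) y)) x +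
        iteratedFDeriv ℝ j (fun y => (ContinuousLinearMap.smulRightL ℝ (ℝ × ℝ) ℂ
          (ContinuousLinearMap.snd ℝ ℝ ℝ)) (g y)) x := by
      rw [hfd]
      exact iteratedFDeriv_add_apply hP.contDiffAt hQ.contDiffAt
    calc ‖iteratedFDeriv ℝ (j + 1) (Iop u₀ g) x‖
        ≤ ‖iteratedFDeriv ℝ j (fun y => (ContinuousLinearMap.smulRightL ℝ (ℝ × ℝ) ℂ
            (ContinuousLinearMap.fst ℝ ℝ ℝ)) (Iop u₀ (d1 g) y)) x‖ +
          ‖iteratedFDeriv ℝ j (fun y => (ContinuousLinearMap.smulRightL ℝ (ℝ × ℝ) ℂ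
            (ContinuousLinearMap.snd ℝ ℝ ℝ)) (g y)) x‖ := by
          rw [h1, hadd]; exact norm_add_le _ _
      _ ≤ ‖iteratedFDeriv ℝ j (Iop u₀ (d1 g)) x‖ + ‖iteratedFDeriv ℝ j g x‖ :=
          add_le_add
            (norm_smulRightL_comp_le _ (ContinuousLinearMap.norm_fst_le ℝ ℝ ℝ) (contDiff_Iop u₀ j (d1 g) (sm_d1 hg)) x)
            (norm_smulRightL_comp_le _ (ContinuousLinearMap.norm_snd_le ℝ ℝ ℝ) (hg j) x)
      _ ≤ (‖Iop u₀ (d1^[j] (d1 g)) x‖ +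
            ∑ i ∈ Finset.range j, ‖iteratedFDeriv ℝ (j - 1 - i) (d1^[i] (d1 g)) x‖) +
          ‖iteratedFDeriv ℝ j g x‖ :=
          add_le_add_left (ih (d1 g) (sm_d1 hg) x) _
      _ = ‖Iop u₀ (d1^[j + 1] g) x‖ +
          ∑ i ∈ Finset.range (j + 1), ‖iteratedFDeriv ℝ (j + 1 - 1 - i) (d1^[i] g) x‖ := by
          rw [Function.iterate_succ_apply]
          rw [Finset.sum_range_succ']
          rw [add_assoc]
          congr 2
          · apply Finset.sum_congr rfl
            intro i _
            rw [Function.iterate_succ_apply]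
            rw [show j + 1 - 1 - (i + 1) = j - 1 - i by omega]

lemma pointwise_bound {f : ℝ × ℝ → ℂ} (hf : Sm f) (m : ℕ) {M : ℝ → ℝ} (hM : Continuous M)
    {u₀ A B : ℝ} (x : ℝ × ℝ) (h1 : A ≤ u₀) (h2 : u₀ ≤ B) (h3 : A ≤ x.2) (h4 : x.2 ≤ B)
    (hbound : ∀ r : ℝ, ‖iteratedFDeriv ℝ (m + 1) f (x.1, r)‖ ≤ M r) :
    ‖iteratedFDeriv ℝ m f x‖ ≤ ‖iteratedFDeriv ℝ m f (x.1, u₀)‖ + ∫ r in A..B, M r := by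
  have hC1 : ContDiff ℝ 1 (iteratedFDeriv ℝ m f) :=
    (hf (m + 1)).iteratedFDeriv_right (by norm_cast; omega)
  set G' : ℝ → ContinuousMultilinearMap ℝ (fun _ : Fin m => ℝ × ℝ) ℂ :=
    fun t => fderiv ℝ (iteratedFDeriv ℝ m f) (x.1, t) ((0 : ℝ), (1 : ℝ)) with hG'def
  have hGd : ∀ t : ℝ, HasDerivAt (fun t => iteratedFDeriv ℝ m f (x.1, t)) (G' t) t := by
    intro t
    have hdiff : HasFDerivAt (iteratedFDeriv ℝ m f)
        (fderiv ℝ (iteratedFDeriv ℝ m f) (x.1, t)) (x.1, t) :=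
      ((hC1.differentiable one_ne_zero) _).hasFDerivAt
    exact hdiff.comp_hasDerivAt t (HasDerivAt.prodMk (hasDerivAt_const t x.1) (hasDerivAt_id t))
  have hfdc : Continuous (fderiv ℝ (iteratedFDeriv ℝ m f)) :=
    (hC1.fderiv_right (m := 0) (by norm_num)).continuous
  have hG'c : Continuous G' :=
    (hfdc.comp (continuous_const.prodMk continuous_id)).clm_apply continuous_const
  have hFTC : (∫ r in u₀..x.2, G' r) =
      iteratedFDeriv ℝ m f (x.1, x.2) - iteratedFDeriv ℝ m f (x.1, u₀) :=
    intervalIntegral.integral_eq_sub_of_hasDerivAt (fun t _ => hGd t)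
      (hG'c.intervalIntegrable _ _)
  have hnorm : ∀ r, ‖G' r‖ ≤ M r := by
    intro r
    calc ‖G' r‖ ≤ ‖fderiv ℝ (iteratedFDeriv ℝ m f) (x.1, r)‖ * ‖((0 : ℝ), (1 : ℝ))‖ :=
        ContinuousLinearMap.le_opNorm _ _
      _ = ‖fderiv ℝ (iteratedFDeriv ℝ m f) (x.1, r)‖ := by
          rw [show ‖((0 : ℝ), (1 : ℝ))‖ = 1 by simp [Prod.norm_def], mul_one]
      _ = ‖iteratedFDeriv ℝ (m + 1) f (x.1, r)‖ := by
          rw [fderiv_iteratedFDeriv]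
          simp only [Function.comp_apply, LinearIsometryEquiv.norm_map]
      _ ≤ M r := hbound r
  have heq : iteratedFDeriv ℝ m f (x.1, u₀) + (∫ r in u₀..x.2, G' r) =
      iteratedFDeriv ℝ m f (x.1, x.2) := by
    rw [hFTC]; abel
  calc ‖iteratedFDeriv ℝ m f x‖ = ‖iteratedFDeriv ℝ m f (x.1, u₀) + ∫ r in u₀..x.2, G' r‖ := by
        rw [heq]
    _ ≤ ‖iteratedFDeriv ℝ m f (x.1, u₀)‖ + ‖∫ r in u₀..x.2, G' r‖ := norm_add_le _ _
    _ ≤ ‖iteratedFDeriv ℝ m f (x.1, u₀)‖ + ∫ r in A..B, M r :=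
        add_le_add_right (norm_intervalIntegral_le h1 h2 h3 h4 hG'c hM hnorm) _

end HWaux

/-- The homotopy operator maps `𝒲_P^s` into `𝒲₀^{s−1}` (scalar form): if the
family of one-forms `h_ℏ du₂` has asymptotic support of order `s` on the line
`P = {u₂ = 0}` (hypotheses (i), (ii)), then the family
`F_ℏ(u₁,u₂) = ∫_{u₀}^{u₂} h_ℏ(u₁,r) dr` (with `u₀ < 0`) satisfies, on each
compact set, `sup ‖D^j F_ℏ‖ ≤ C'·ℏ^{−(s−1+j)/2}` for all `ℏ ∈ (0,1]`. -/
theorem homotopy_W_estimate (s : ℤ) (u₀ : ℝ) (hu₀ : u₀ < 0)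
    (h : ℝ → ℝ × ℝ → ℂ)
    (hsmooth : ∀ hb : ℝ, hb ∈ Set.Ioc (0 : ℝ) 1 → ContDiff ℝ (⊤ : ℕ∞) (h hb))
    (hexp : ∀ K : Set (ℝ × ℝ), IsCompact K →
      K ∩ {x : ℝ × ℝ | x.2 = 0} = ∅ →
      ∀ j : ℕ, ∃ C c : ℝ, 0 < C ∧ 0 < c ∧
        ∀ hb : ℝ, hb ∈ Set.Ioc (0 : ℝ) 1 → ∀ x ∈ K,
          ‖iteratedFDeriv ℝ j (h hb) x‖ ≤ C * Real.exp (-c / hb))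
    (hint : ∀ K₁ : Set ℝ, IsCompact K₁ → ∀ a b : ℝ, 0 < a → 0 < b →
      ∀ j β : ℕ, ∃ C : ℝ, 0 < C ∧
        ∀ hb : ℝ, hb ∈ Set.Ioc (0 : ℝ) 1 →
          (∫ u₂ in (-a)..b,
              |u₂| ^ β * (⨆ u₁ ∈ K₁, ‖iteratedFDeriv ℝ j (h hb) (u₁, u₂)‖)) ≤
            C * hb ^ (-((j : ℝ) + (s : ℝ) - (β : ℝ) - 1) / 2)) :
    ∀ K' : Set (ℝ × ℝ), IsCompact K' → ∀ j : ℕ, ∃ C' : ℝ, 0 < C' ∧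
      ∀ hb : ℝ, hb ∈ Set.Ioc (0 : ℝ) 1 → ∀ x ∈ K',
        ‖iteratedFDeriv ℝ j
            (fun y : ℝ × ℝ => ∫ r in u₀..y.2, h hb (y.1, r)) x‖ ≤
          C' * hb ^ (-((s : ℝ) - 1 + (j : ℝ)) / 2) := by
  intro K' hK' j
  obtain ⟨R, hR⟩ := hK'.isBounded.subset_closedBall 0
  set R' : ℝ := max R 0 with hR'def
  have hR'0 : 0 ≤ R' := le_max_right _ _
  set K₁ : Set ℝ := Set.Icc (-(R' + 1)) (R' + 1) with hK₁def
  have hK₁c : IsCompact K₁ := isCompact_Icc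
  have hKne : K₁.Nonempty := ⟨0, by rw [Set.mem_Icc]; constructor <;> linarith⟩
  set a : ℝ := max (R' + 1) (1 - u₀) with hadef
  set b : ℝ := R' + 1 with hbdef
  have haR : R' + 1 ≤ a := le_max_left _ _
  have ha0 : 0 < a := by linarith
  have hb0 : 0 < b := by rw [hbdef]; linarith
  have hau₀ : -a ≤ u₀ := by
    have h1 : 1 - u₀ ≤ a := le_max_right _ _
    linarith
  have hub : u₀ ≤ b := le_trans hu₀.le hb0.le
  have hmemK : ∀ x ∈ K', x.1 ∈ K₁ ∧ -a ≤ x.2 ∧ x.2 ≤ b := by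
    intro x hx
    have hxb := hR hx
    rw [Metric.mem_closedBall, dist_zero_right] at hxb
    have h1 : |x.1| ≤ R := le_trans (norm_fst_le x) hxb
    have h2 : |x.2| ≤ R := le_trans (norm_snd_le x) hxb
    have hRR' : R ≤ R' := le_max_left _ _
    obtain ⟨h1a, h1b⟩ := abs_le.mp h1
    obtain ⟨h2a, h2b⟩ := abs_le.mp h2
    refine ⟨⟨by linarith, by linarith⟩, by linarith, by linarith⟩
  have hsm : ∀ hb : ℝ, hb ∈ Set.Ioc (0 : ℝ) 1 → HWaux.Sm (h hb) :=
    fun hb hhb n => (hsmooth hb hhb).of_le (by exact_mod_cast le_top)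
  obtain ⟨C₁, hC₁pos, hC₁⟩ := hint K₁ hK₁c a b ha0 hb0 j 0
  have hKexp : IsCompact (K₁ ×ˢ ({u₀} : Set ℝ)) := hK₁c.prod isCompact_singleton
  have hKdisj : (K₁ ×ˢ ({u₀} : Set ℝ)) ∩ {x : ℝ × ℝ | x.2 = 0} = ∅ := by
    rw [Set.eq_empty_iff_forall_notMem]
    rintro q ⟨⟨_, hq2⟩, hq0⟩
    simp only [Set.mem_singleton_iff] at hq2
    simp only [Set.mem_setOf_eq] at hq0
    rw [hq2] at hq0
    exact absurd hq0 hu₀.ne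
  obtain ⟨C₂, c, hC₂pos, hcpos, hC₂⟩ := hexp _ hKexp hKdisj (j - 1)
  set p : ℝ := -((s : ℝ) - 1 + (j : ℝ)) / 2 with hpdef
  obtain ⟨C₃, hC₃pos, hC₃⟩ := HWaux.exp_neg_div_le c hcpos p
  have hC'pos : 0 < C₁ + (j : ℝ) * (C₂ * C₃ + C₁) + 1 := by
    have h1 : (0:ℝ) ≤ C₂ * C₃ + C₁ := by positivity
    have h2 : (0:ℝ) ≤ (j : ℝ) * (C₂ * C₃ + C₁) := mul_nonneg (Nat.cast_nonneg j) h1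
    linarith
  refine ⟨C₁ + (j : ℝ) * (C₂ * C₃ + C₁) + 1, hC'pos, ?_⟩
  intro hb hhb x hx
  obtain ⟨hx1, hx2a, hx2b⟩ := hmemK x hx
  have hsmb := hsm hb hhb
  have hfun : (fun y : ℝ × ℝ => ∫ r in u₀..y.2, h hb (y.1, r)) = HWaux.Iop u₀ (h hb) := rfl
  rw [hfun]
  -- the majorant function
  set Mf : ℝ → ℝ := fun r => sSup ((fun u₁ => ‖iteratedFDeriv ℝ j (h hb) (u₁, r)‖) '' K₁)
    with hMfdef
  have hDjc : Continuous fun q : ℝ × ℝ => ‖iteratedFDeriv ℝ j (h hb) q‖ :=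
    (ContDiff.continuous_iteratedFDeriv le_rfl (hsmb j)).norm
  have hMfc : Continuous Mf := by
    apply hK₁c.continuous_sSup (f := fun r u₁ => ‖iteratedFDeriv ℝ j (h hb) (u₁, r)‖)
    exact hDjc.comp (continuous_snd.prodMk continuous_fst)
  have himage : ∀ r : ℝ, BddAbove ((fun u₁ => ‖iteratedFDeriv ℝ j (h hb) (u₁, r)‖) '' K₁) :=
    fun r => hK₁c.bddAbove_image
      ((hDjc.comp (continuous_id.prodMk continuous_const)).continuousOn)
  have hMfb : ∀ (x₁ r : ℝ), x₁ ∈ K₁ → ‖iteratedFDeriv ℝ j (h hb) (x₁, r)‖ ≤ Mf r :=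
    fun x₁ r hx₁ => le_csSup (himage r) ⟨x₁, hx₁, rfl⟩
  have hbp : 0 < hb ^ p := Real.rpow_pos_of_pos hhb.1 p
  have hintMf : (∫ r in (-a)..b, Mf r) ≤ C₁ * hb ^ p := by
    have h0 := hC₁ hb hhb
    have heqint : (∫ u₂ in (-a)..b,
        |u₂| ^ (0:ℕ) * (⨆ u₁ ∈ K₁, ‖iteratedFDeriv ℝ j (h hb) (u₁, u₂)‖)) =
        ∫ r in (-a)..b, Mf r := by
      apply intervalIntegral.integral_congr
      intro r _
      show |r| ^ (0:ℕ) * (⨆ u₁ ∈ K₁, ‖iteratedFDeriv ℝ j (h hb) (u₁, r)‖) = Mf r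
      rw [pow_zero, one_mul]
      exact HWaux.biSup_eq_csSup hKne (fun u₁ => norm_nonneg _) (himage r)
    rw [heqint] at h0
    have hpow_eq : hb ^ (-((j : ℝ) + (s : ℝ) - ((0:ℕ) : ℝ) - 1) / 2) = hb ^ p := by
      rw [hpdef]
      congr 1
      push_cast
      ring
    rwa [hpow_eq] at h0
  have hclaim := HWaux.claimS u₀ j (h hb) hsmb x
  have hp1 : ‖HWaux.Iop u₀ (HWaux.d1^[j] (h hb)) x‖ ≤ ∫ r in (-a)..b, Mf r := by
    apply HWaux.norm_intervalIntegral_le hau₀ hub hx2a hx2b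
    · exact ((HWaux.Sm.d1_iter hsmb j 0).continuous).comp
        (continuous_const.prodMk continuous_id)
    · exact hMfc
    · intro r
      calc ‖HWaux.d1^[j] (h hb) (x.1, r)‖
          = ‖iteratedFDeriv ℝ 0 (HWaux.d1^[j] (h hb)) (x.1, r)‖ := norm_iteratedFDeriv_zero.symm
        _ ≤ ‖iteratedFDeriv ℝ (0 + j) (h hb) (x.1, r)‖ :=
            HWaux.norm_itfd_d1_iter_le hsmb j 0 _
        _ = ‖iteratedFDeriv ℝ j (h hb) (x.1, r)‖ := by rw [zero_add]
        _ ≤ Mf r := hMfb x.1 r hx1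
  have hX : ∀ i ∈ Finset.range j, ‖iteratedFDeriv ℝ (j - 1 - i) (HWaux.d1^[i] (h hb)) x‖ ≤
      C₂ * Real.exp (-c / hb) + ∫ r in (-a)..b, Mf r := by
    intro i hi
    rw [Finset.mem_range] at hi
    calc ‖iteratedFDeriv ℝ (j - 1 - i) (HWaux.d1^[i] (h hb)) x‖
        ≤ ‖iteratedFDeriv ℝ (j - 1 - i + i) (h hb) x‖ :=
          HWaux.norm_itfd_d1_iter_le hsmb i _ x
      _ = ‖iteratedFDeriv ℝ (j - 1) (h hb) x‖ := by rw [show j - 1 - i + i = j - 1 by omega]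
      _ ≤ ‖iteratedFDeriv ℝ (j - 1) (h hb) (x.1, u₀)‖ + ∫ r in (-a)..b, Mf r := by
          apply HWaux.pointwise_bound hsmb (j - 1) hMfc x hau₀ hub hx2a hx2b
          intro r
          rw [show j - 1 + 1 = j by omega]
          exact hMfb x.1 r hx1
      _ ≤ C₂ * Real.exp (-c / hb) + ∫ r in (-a)..b, Mf r :=
          add_le_add_left (hC₂ hb hhb (x.1, u₀) (Set.mk_mem_prod hx1 rfl)) _
  have hsum : ∑ i ∈ Finset.range j, ‖iteratedFDeriv ℝ (j - 1 - i) (HWaux.d1^[i] (h hb)) x‖ ≤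
      (j : ℝ) * (C₂ * Real.exp (-c / hb) + ∫ r in (-a)..b, Mf r) := by
    have h0 := Finset.sum_le_card_nsmul _ _ _ hX
    rwa [Finset.card_range, nsmul_eq_mul] at h0
  have hexp3 : Real.exp (-c / hb) ≤ C₃ * hb ^ p := hC₃ hb hhb
  calc ‖iteratedFDeriv ℝ j (HWaux.Iop u₀ (h hb)) x‖
      ≤ ‖HWaux.Iop u₀ (HWaux.d1^[j] (h hb)) x‖ +
        ∑ i ∈ Finset.range j, ‖iteratedFDeriv ℝ (j - 1 - i) (HWaux.d1^[i] (h hb)) x‖ := hclaim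
    _ ≤ (∫ r in (-a)..b, Mf r) +
        (j : ℝ) * (C₂ * Real.exp (-c / hb) + ∫ r in (-a)..b, Mf r) := add_le_add hp1 hsum
    _ ≤ C₁ * hb ^ p + (j : ℝ) * (C₂ * (C₃ * hb ^ p) + C₁ * hb ^ p) := by
        apply add_le_add hintMf
        apply mul_le_mul_of_nonneg_left _ (Nat.cast_nonneg j)
        exact add_le_add (mul_le_mul_of_nonneg_left hexp3 hC₂pos.le) hintMf
    _ = (C₁ + (j : ℝ) * (C₂ * C₃ + C₁)) * hb ^ p := by ring
    _ ≤ (C₁ + (j : ℝ) * (C₂ * C₃ + C₁) + 1) * hb ^ p := by nlinarith [hbp]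
end

section
/- Let r, s ∈ ℤ. For each ℏ ∈ (0,1] let h_ℏ, f_ℏ : ℝ² → ℂ be smooth, and assume: (i) for every compact interval K₁ ⊂ ℝ, all a, b > 0 and all j, β ∈ ℕ there exists C > 0 such that ∫_{−a}^{b} |u₂|^β · ( sup_{u₁∈K₁} ‖D^j h_ℏ(u₁,u₂)‖ ) du₂ ≤ C·ℏ^{−(s+j−β−1)/2} for all ℏ ∈ (0,1]; (ii) for every compact set K ⊂ ℝ² and every j ∈ ℕ there exists C > 0 such that sup_{x∈K} ‖D^j f_ℏ(x)‖ ≤ C·ℏ^{−(r+j)/2} for all ℏ ∈ (0,1]. Then the pointwise product h_ℏ·f_ℏ satisfies: for every compact interval K₁ ⊂ ℝ, all a, b > 0 and all j, β ∈ ℕ there exists C > 0 such that ∫_{−a}^{b} |u₂|^β · ( sup_{u₁∈K₁} ‖D^j (h_ℏ·f_ℏ)(u₁,u₂)‖ ) du₂ ≤ C·ℏ^{−(r+s+j−β−1)/2} for all ℏ ∈ (0,1]. -/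
open Real intervalIntegral

lemma biSup_eq_sSup_image (K : Set ℝ) (g : ℝ → ℝ) (hnn : ∀ x, 0 ≤ g x)
    (hbdd : BddAbove (g '' K)) : (⨆ x ∈ K, g x) = sSup (g '' K) := by
  rcases K.eq_empty_or_nonempty with rfl | hne
  · simp [Real.sSup_empty, Real.iSup_const_zero]
  · apply le_antisymm
    · refine Real.iSup_le (fun x => Real.iSup_le (fun hx => le_csSup hbdd ⟨x, hx, rfl⟩) ?_) ?_ <;>
        exact Real.sSup_nonneg (by rintro y ⟨x, hx, rfl⟩; exact hnn x)
    · refine Real.sSup_le ?_ ?_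
      · rintro y ⟨x, hx, rfl⟩
        have h1 : g x = ⨆ _ : x ∈ K, g x := (ciSup_pos (f := fun _ : x ∈ K => g x) hx).symm
        rw [h1]
        refine le_ciSup (f := fun x => ⨆ _ : x ∈ K, g x) ?_ x
        refine ⟨sSup (g '' K) ⊔ 0, ?_⟩
        rintro y ⟨x, rfl⟩
        show (⨆ _ : x ∈ K, g x) ≤ sSup (g '' K) ⊔ 0
        by_cases hx : x ∈ K
        · rw [ciSup_pos (f := fun _ : x ∈ K => g x) hx]
          exact le_sup_of_le_left (le_csSup hbdd ⟨x, hx, rfl⟩)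
        · simp [hx]
      · exact Real.iSup_nonneg (fun x => Real.iSup_nonneg (fun _ => hnn x))

lemma le_biSup_of_mem {K : Set ℝ} {g : ℝ → ℝ} (hnn : ∀ x, 0 ≤ g x)
    (hbdd : BddAbove (g '' K)) {x : ℝ} (hx : x ∈ K) : g x ≤ ⨆ x ∈ K, g x := by
  rw [biSup_eq_sSup_image K g hnn hbdd]
  exact le_csSup hbdd ⟨x, hx, rfl⟩

/-- `𝒲_P^s(U) · 𝒲₀^r(U) ⊂ 𝒲_P^{r+s}(U)` (scalar form): if the one-form
`h_ℏ du₂` has asymptotic support of order `s` on the line `P = {u₂ = 0}`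
(hypothesis (i)) and `f_ℏ ∈ 𝒲₀^r` (hypothesis (ii)), then the pointwise
product `h_ℏ·f_ℏ du₂` has asymptotic support of order `r + s` on `P`. -/
theorem W_product_estimate (r s : ℤ)
    (h f : ℝ → ℝ × ℝ → ℂ)
    (hsmooth : ∀ hb : ℝ, hb ∈ Set.Ioc (0 : ℝ) 1 → ContDiff ℝ (⊤ : ℕ∞) (h hb))
    (fsmooth : ∀ hb : ℝ, hb ∈ Set.Ioc (0 : ℝ) 1 → ContDiff ℝ (⊤ : ℕ∞) (f hb))
    (hint : ∀ K₁ : Set ℝ, IsCompact K₁ → ∀ a b : ℝ, 0 < a → 0 < b →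
      ∀ j β : ℕ, ∃ C : ℝ, 0 < C ∧
        ∀ hb : ℝ, hb ∈ Set.Ioc (0 : ℝ) 1 →
          (∫ u₂ in (-a)..b,
              |u₂| ^ β * (⨆ u₁ ∈ K₁, ‖iteratedFDeriv ℝ j (h hb) (u₁, u₂)‖)) ≤
            C * hb ^ (-((s : ℝ) + (j : ℝ) - (β : ℝ) - 1) / 2))
    (hf : ∀ K : Set (ℝ × ℝ), IsCompact K → ∀ j : ℕ, ∃ C : ℝ, 0 < C ∧
      ∀ hb : ℝ, hb ∈ Set.Ioc (0 : ℝ) 1 → ∀ x ∈ K,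
        ‖iteratedFDeriv ℝ j (f hb) x‖ ≤ C * hb ^ (-((r : ℝ) + (j : ℝ)) / 2)) :
    ∀ K₁ : Set ℝ, IsCompact K₁ → ∀ a b : ℝ, 0 < a → 0 < b →
      ∀ j β : ℕ, ∃ C : ℝ, 0 < C ∧
        ∀ hb : ℝ, hb ∈ Set.Ioc (0 : ℝ) 1 →
          (∫ u₂ in (-a)..b,
              |u₂| ^ β *
                (⨆ u₁ ∈ K₁,
                  ‖iteratedFDeriv ℝ j (fun x : ℝ × ℝ => h hb x * f hb x) (u₁, u₂)‖)) ≤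
            C * hb ^ (-((r : ℝ) + (s : ℝ) + (j : ℝ) - (β : ℝ) - 1) / 2) := by
  intro K₁ hK₁ a b ha hb0 j β
  have habK : IsCompact (K₁ ×ˢ Set.Icc (-a) b) := hK₁.prod isCompact_Icc
  choose Cf hCfpos hCf using hf (K₁ ×ˢ Set.Icc (-a) b) habK
  choose Ch hChpos hCh using hint K₁ hK₁ a b ha hb0
  have hCpos : 0 < ∑ i ∈ Finset.range (j + 1), (j.choose i : ℝ) * Cf (j - i) * Ch i β := by
    refine Finset.sum_pos (fun i hi => ?_) ⟨0, Finset.mem_range.mpr (Nat.succ_pos j)⟩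
    have h1 : 0 < (j.choose i : ℝ) := by
      exact_mod_cast Nat.choose_pos (Nat.lt_succ_iff.mp (Finset.mem_range.mp hi))
    exact mul_pos (mul_pos h1 (hCfpos _)) (hChpos _ _)
  refine ⟨_, hCpos, ?_⟩
  intro hb hhb
  have hbpos : 0 < hb := hhb.1
  -- the sup functions for derivatives of h
  set S : ℕ → ℝ → ℝ := fun i u₂ => ⨆ u₁ ∈ K₁, ‖iteratedFDeriv ℝ i (h hb) (u₁, u₂)‖ with hSdef
  have hDhcont : ∀ i : ℕ, Continuous fun p : ℝ × ℝ => iteratedFDeriv ℝ i (h hb) p :=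
    fun i => (hsmooth hb hhb).continuous_iteratedFDeriv (by exact_mod_cast le_top)
  have hbddS : ∀ (i : ℕ) (u₂ : ℝ),
      BddAbove ((fun u₁ => ‖iteratedFDeriv ℝ i (h hb) (u₁, u₂)‖) '' K₁) := by
    intro i u₂
    exact (hK₁.image (((hDhcont i).comp (Continuous.prodMk_left u₂)).norm)).bddAbove
  have hScont : ∀ i : ℕ, Continuous (S i) := by
    intro i
    have hc : Continuous fun p : ℝ × ℝ => ‖iteratedFDeriv ℝ i (h hb) (p.2, p.1)‖ :=
      ((hDhcont i).comp (continuous_snd.prodMk continuous_fst)).norm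
    have := hK₁.continuous_sSup
      (f := fun u₂ u₁ => ‖iteratedFDeriv ℝ i (h hb) (u₁, u₂)‖) hc
    have heq : (S i) = fun u₂ =>
        sSup ((fun u₁ => ‖iteratedFDeriv ℝ i (h hb) (u₁, u₂)‖) '' K₁) := by
      funext u₂
      exact biSup_eq_sSup_image _ _ (fun _ => norm_nonneg _) (hbddS i u₂)
    rw [heq]; exact this
  -- the integrand pieces
  set g : ℕ → ℝ → ℝ := fun i u₂ => |u₂| ^ β * S i u₂ with hgdef
  have hgcont : ∀ i, Continuous (g i) :=
    fun i => ((continuous_abs.pow β)).mul (hScont i)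
  set k : ℕ → ℝ := fun i =>
    (j.choose i : ℝ) * Cf (j - i) * hb ^ (-((r : ℝ) + ((j - i : ℕ) : ℝ)) / 2) with hkdef
  have hknn : ∀ i, 0 ≤ k i := fun i =>
    mul_nonneg (mul_nonneg (Nat.cast_nonneg _) (hCfpos _).le)
      (Real.rpow_pos_of_pos hbpos _).le
  -- pointwise bound
  have hpt : ∀ u₂ ∈ Set.Icc (-a) b,
      |u₂| ^ β * (⨆ u₁ ∈ K₁,
        ‖iteratedFDeriv ℝ j (fun x : ℝ × ℝ => h hb x * f hb x) (u₁, u₂)‖) ≤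
      ∑ i ∈ Finset.range (j + 1), k i * g i u₂ := by
    intro u₂ hu₂
    have hsum_nn : 0 ≤ ∑ i ∈ Finset.range (j + 1), k i * S i u₂ :=
      Finset.sum_nonneg fun i _ => mul_nonneg (hknn i)
        (Real.iSup_nonneg fun _ => Real.iSup_nonneg fun _ => norm_nonneg _)
    have hsup : (⨆ u₁ ∈ K₁,
        ‖iteratedFDeriv ℝ j (fun x : ℝ × ℝ => h hb x * f hb x) (u₁, u₂)‖) ≤
        ∑ i ∈ Finset.range (j + 1), k i * S i u₂ := by
      refine Real.iSup_le (fun u₁ => Real.iSup_le (fun hu₁ => ?_) hsum_nn) hsum_nn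
      refine le_trans (norm_iteratedFDeriv_mul_le (hsmooth hb hhb) (fsmooth hb hhb)
        (u₁, u₂) (by exact_mod_cast le_top)) ?_
      refine Finset.sum_le_sum fun i hi => ?_
      have hh_le : ‖iteratedFDeriv ℝ i (h hb) (u₁, u₂)‖ ≤ S i u₂ :=
        le_biSup_of_mem (fun _ => norm_nonneg _) (hbddS i u₂) hu₁
      have hf_le : ‖iteratedFDeriv ℝ (j - i) (f hb) (u₁, u₂)‖ ≤
          Cf (j - i) * hb ^ (-((r : ℝ) + ((j - i : ℕ) : ℝ)) / 2) :=
        hCf (j - i) hb hhb (u₁, u₂) ⟨hu₁, hu₂⟩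
      calc (j.choose i : ℝ) * ‖iteratedFDeriv ℝ i (h hb) (u₁, u₂)‖ *
            ‖iteratedFDeriv ℝ (j - i) (f hb) (u₁, u₂)‖
          ≤ (j.choose i : ℝ) * S i u₂ *
            (Cf (j - i) * hb ^ (-((r : ℝ) + ((j - i : ℕ) : ℝ)) / 2)) := by
            refine mul_le_mul (mul_le_mul_of_nonneg_left hh_le (Nat.cast_nonneg _)) hf_le
              (norm_nonneg _) ?_
            exact mul_nonneg (Nat.cast_nonneg _)
              (le_trans (norm_nonneg _) hh_le)
        _ = k i * S i u₂ := by simp only [hkdef]; ring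
    calc |u₂| ^ β * (⨆ u₁ ∈ K₁,
          ‖iteratedFDeriv ℝ j (fun x : ℝ × ℝ => h hb x * f hb x) (u₁, u₂)‖)
        ≤ |u₂| ^ β * ∑ i ∈ Finset.range (j + 1), k i * S i u₂ :=
          mul_le_mul_of_nonneg_left hsup (pow_nonneg (abs_nonneg _) _)
      _ = ∑ i ∈ Finset.range (j + 1), k i * g i u₂ := by
          rw [Finset.mul_sum]; refine Finset.sum_congr rfl fun i _ => ?_
          simp only [hgdef]; ring
  have hab : (-a : ℝ) ≤ b := by linarith
  by_cases hInt : IntervalIntegrable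
      (fun u₂ => |u₂| ^ β * (⨆ u₁ ∈ K₁,
        ‖iteratedFDeriv ℝ j (fun x : ℝ × ℝ => h hb x * f hb x) (u₁, u₂)‖))
      MeasureTheory.volume (-a) b
  case neg =>
    rw [intervalIntegral.integral_undef hInt]
    exact (mul_pos hCpos (Real.rpow_pos_of_pos hbpos _)).le
  case pos =>
  have hRHSint : ∀ i, IntervalIntegrable (fun u₂ => k i * g i u₂)
      MeasureTheory.volume (-a) b :=
    fun i => ((continuous_const.mul (hgcont i))).intervalIntegrable _ _
  calc (∫ u₂ in (-a)..b, |u₂| ^ β * (⨆ u₁ ∈ K₁,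
        ‖iteratedFDeriv ℝ j (fun x : ℝ × ℝ => h hb x * f hb x) (u₁, u₂)‖))
      ≤ ∫ u₂ in (-a)..b, ∑ i ∈ Finset.range (j + 1), k i * g i u₂ := by
        refine intervalIntegral.integral_mono_on hab hInt ?_ hpt
        exact (continuous_finset_sum _ fun i _ => continuous_const.mul
          (hgcont i)).intervalIntegrable _ _
    _ = ∑ i ∈ Finset.range (j + 1), k i * ∫ u₂ in (-a)..b, g i u₂ := by
        rw [intervalIntegral.integral_finset_sum fun i _ => hRHSint i]
        exact Finset.sum_congr rfl fun i _ => intervalIntegral.integral_const_mul _ _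
    _ ≤ ∑ i ∈ Finset.range (j + 1), k i *
          (Ch i β * hb ^ (-((s : ℝ) + (i : ℝ) - (β : ℝ) - 1) / 2)) := by
        exact Finset.sum_le_sum fun i _ =>
          mul_le_mul_of_nonneg_left (hCh i β hb hhb) (hknn i)
    _ = (∑ i ∈ Finset.range (j + 1), (j.choose i : ℝ) * Cf (j - i) * Ch i β) *
          hb ^ (-((r : ℝ) + (s : ℝ) + (j : ℝ) - (β : ℝ) - 1) / 2) := by
        rw [Finset.sum_mul]
        refine Finset.sum_congr rfl fun i hi => ?_
        have hij : i ≤ j := Nat.lt_succ_iff.mp (Finset.mem_range.mp hi)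
        have hcast : ((j - i : ℕ) : ℝ) = (j : ℝ) - (i : ℝ) := Nat.cast_sub hij
        have hexp : (-((r : ℝ) + ((j - i : ℕ) : ℝ)) / 2) +
            (-((s : ℝ) + (i : ℝ) - (β : ℝ) - 1) / 2) =
            -((r : ℝ) + (s : ℝ) + (j : ℝ) - (β : ℝ) - 1) / 2 := by
          rw [hcast]; ring
        simp only [hkdef]
        rw [mul_mul_mul_comm, ← Real.rpow_add hbpos, hexp]
end
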